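/- arXiv:2512.02345 — 5 statements merged into one kernel-verified Lean document; each statement's English description precedes it below -/
import Mathlib

section
/- Let R be a commutative ring and let h, j : ℕ → R be sequences with h 0 = 1 and j 1 = 1 satisfying equation (D1): n·h_n = Σ_{r=1}^{n} j_r · h_{n-r} for all n ≥ 1. For n ≥ 1 let H_n(h̄) be the n×n matrix over R whose entry in row i and column k (1 ≤ i,k ≤ n) equals i·h_i if k = 1, equals h_{i-k+1} if 2 ≤ k ≤ i, equals 1 if k = i+1, and equals 0 if k > i+1. Then for all n ≥ 1, j_n = (-1)^{n+1} · det(H_n(h̄)). -/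
/-- The matrix `H_n(h̄)`: first column `(h 1, 2 • h 2, …, n • h n)ᵀ`, entries `h (i - k + 1)`
in (1-based) row `i`, column `k` for `2 ≤ k ≤ i`, superdiagonal entries `1`, and `0` above
the superdiagonal. Indices are 0-based internally, so row `i` corresponds to `i.val + 1`. -/
def Hmat {R : Type*} [CommRing R] (h : ℕ → R) (n : ℕ) : Matrix (Fin n) (Fin n) R :=
  Matrix.of fun i k =>
    if (k : ℕ) = 0 then ((i : ℕ) + 1) • h ((i : ℕ) + 1)
    else if (k : ℕ) ≤ (i : ℕ) then h ((i : ℕ) - (k : ℕ) + 1)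
    else if (k : ℕ) = (i : ℕ) + 1 then 1
    else 0

/-- Lemma 2.2, equation (1): if `h 0 = 1`, `j 1 = 1` and (D1) holds, then
`j n = (-1)^(n+1) * det (H_n(h̄))` for all `n ≥ 1`. -/
theorem j_eq_det_Hmat {R : Type*} [CommRing R] (h j : ℕ → R)
    (h0 : h 0 = 1) (j1 : j 1 = 1)
    (hD : ∀ n : ℕ, 1 ≤ n → n • h n = ∑ r ∈ Finset.Icc 1 n, j r * h (n - r)) :
    ∀ n : ℕ, 1 ≤ n → j n = (-1 : R) ^ (n + 1) * (Hmat h n).det := by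
  -- applying the matrix to the vector (1, -j 1, -j 2, …) gives j n • e_last
  have key : ∀ n : ℕ, ∀ i : Fin n,
      (Hmat h n).mulVec (fun k : Fin n => if (k : ℕ) = 0 then 1 else -j (k : ℕ)) i
        = if (i : ℕ) + 1 = n then j n else 0 := by
    intro n i
    set I := (i : ℕ) with hIdef
    have hI : I < n := i.isLt
    set F : ℕ → R := fun k =>
      (if k = 0 then ((I : ℕ) + 1) • h (I + 1)
        else if k ≤ I then h (I - k + 1)
        else if k = I + 1 then 1
        else 0) * (if k = 0 then 1 else -j k) with hF
    have hF0 : F 0 = (I + 1) • h (I + 1) := by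
      norm_num [hF]
    have hFk : ∀ k ∈ Finset.range I, F (k + 1) = -(j (k + 1) * h (I - k)) := by
      intro k hk
      rw [Finset.mem_range] at hk
      have c1 : ¬(k + 1 = 0) := by omega
      have c2 : k + 1 ≤ I := by omega
      simp only [hF, if_neg c1, if_pos c2]
      rw [show I - (k + 1) + 1 = I - k from by omega]
      ring
    have hFtop : F (I + 1) = -j (I + 1) := by
      have c1 : ¬(I + 1 = 0) := by omega
      have c2 : ¬(I + 1 ≤ I) := by omega
      simp only [hF, if_neg c1, if_neg c2]
      norm_num
    have hsum : (Hmat h n).mulVec (fun k : Fin n => if (k : ℕ) = 0 then 1 else -j (k : ℕ)) i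
        = ∑ k ∈ Finset.range n, F k := by
      rw [← Fin.sum_univ_eq_sum_range F n]
      simp only [Matrix.mulVec, dotProduct, Hmat, Matrix.of_apply, hF, ← hIdef]
    rw [hsum]
    -- equation (D1) at I+1, rewritten as a range sum
    have hD' : (I + 1) • h (I + 1)
        = (∑ k ∈ Finset.range I, j (k + 1) * h (I - k)) + j (I + 1) := by
      have hh := hD (I + 1) (by omega)
      rw [← Finset.Ico_add_one_right_eq_Icc, Finset.sum_Ico_eq_sum_range] at hh
      have harg : I + 1 + 1 - 1 = I + 1 := by omega
      rw [harg] at hh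
      rw [hh, Finset.sum_range_succ]
      congr 1
      · refine Finset.sum_congr rfl fun k hk => ?_
        rw [Finset.mem_range] at hk
        rw [show (1 : ℕ) + k = k + 1 from by omega,
          show I + 1 - (k + 1) = I - k from by omega]
      · rw [show (1 : ℕ) + I = I + 1 from by omega,
          show I + 1 - (I + 1) = 0 from by omega, h0, mul_one]
    have hmain : ∑ k ∈ Finset.range (I + 1), F k = j (I + 1) := by
      rw [Finset.sum_range_succ', hF0, Finset.sum_congr rfl hFk, hD']
      rw [Finset.sum_neg_distrib]
      ring
    by_cases hcase : I + 1 = n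
    · rw [if_pos hcase, ← hcase, hmain, hcase]
    · rw [if_neg hcase]
      have hsub : ∑ k ∈ Finset.range n, F k = ∑ k ∈ Finset.range (I + 2), F k := by
        refine (Finset.sum_subset (Finset.range_subset_range.mpr (by omega)) ?_).symm
        intro k _ hk
        rw [Finset.mem_range, not_lt] at hk
        simp only [hF]
        rw [if_neg (by omega), if_neg (by omega), if_neg (by omega), zero_mul]
      rw [hsub, Finset.sum_range_succ, hmain, hFtop]
      ring
  intro n hn
  obtain ⟨m, rfl⟩ : ∃ m, n = m + 1 := ⟨n - 1, by omega⟩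
  set A := Hmat h (m + 1) with hA
  set w : Fin (m + 1) → R := fun k => if (k : ℕ) = 0 then 1 else -j (k : ℕ) with hw
  set e : Fin (m + 1) → R := fun i => if i = Fin.last m then 1 else 0 with he
  -- Cramer's rule
  have cram : Matrix.cramer A (A.mulVec w) = A.det • w := by
    rw [Matrix.cramer_eq_adjugate_mulVec, Matrix.mulVec_mulVec, Matrix.adjugate_mul,
      Matrix.smul_mulVec, Matrix.one_mulVec]
  have cram0 : (A.updateCol 0 (A.mulVec w)).det = A.det := by
    have hc := congrFun cram 0
    rw [Matrix.cramer_apply] at hc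
    simpa [hw] using hc
  -- the vector A.mulVec w is j (m+1) • e_last
  have hb : A.mulVec w = (j (m + 1)) • e := by
    funext i
    rw [hA, hw, key (m + 1) i]
    rcases eq_or_ne (i : ℕ) m with hi | hi
    · have hil : i = Fin.last m := by ext; simpa using hi
      rw [if_pos (by omega), he]
      simp [hil]
    · have hil : i ≠ Fin.last m := fun hcon => hi (by rw [hcon]; simp)
      rw [if_neg (by omega), he]
      simp [hil]
  -- determinant of the matrix with first column replaced by e_last
  have hminor : (A.updateCol 0 e).det = (-1 : R) ^ m := by
    rw [Matrix.det_succ_column_zero]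
    rw [Finset.sum_eq_single (Fin.last m)]
    · have hcol : (A.updateCol 0 e) (Fin.last m) 0 = 1 := by
        simp [Matrix.updateCol_apply, he]
      rw [hcol, mul_one]
      have hM : ((A.updateCol 0 e).submatrix (Fin.last m).succAbove Fin.succ).det = 1 := by
        have htri : ((A.updateCol 0 e).submatrix (Fin.last m).succAbove
            Fin.succ).BlockTriangular OrderDual.toDual := by
          intro p q hpq
          have hpq' : (p : ℕ) < (q : ℕ) := hpq
          simp only [Matrix.submatrix_apply, Fin.succAbove_last]
          rw [Matrix.updateCol_apply, if_neg (by simp [Fin.ext_iff])]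
          simp only [hA, Hmat, Matrix.of_apply, Fin.val_succ, Fin.coe_castSucc]
          rw [if_neg (show ¬((q : ℕ) + 1 = 0) by omega),
            if_neg (show ¬((q : ℕ) + 1 ≤ (p : ℕ)) by omega),
            if_neg (show ¬((q : ℕ) + 1 = (p : ℕ) + 1) by omega)]
        rw [Matrix.det_of_lowerTriangular _ htri]
        apply Finset.prod_eq_one
        intro p _
        simp only [Matrix.submatrix_apply, Fin.succAbove_last]
        rw [Matrix.updateCol_apply, if_neg (by simp [Fin.ext_iff])]
        simp only [hA, Hmat, Matrix.of_apply, Fin.val_succ, Fin.coe_castSucc]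
        rw [if_neg (show ¬((p : ℕ) + 1 = 0) by omega),
          if_neg (show ¬((p : ℕ) + 1 ≤ (p : ℕ)) by omega)]
        simp
      rw [hM, mul_one, Fin.val_last]
    · intro b _ hb'
      have hz : (A.updateCol 0 e) b 0 = 0 := by
        simp [Matrix.updateCol_apply, he, hb']
      rw [hz, mul_zero, zero_mul]
    · intro hcon
      exact absurd (Finset.mem_univ _) hcon
  have hdet : A.det = j (m + 1) * (-1 : R) ^ m := by
    rw [← cram0, hb, Matrix.det_updateCol_smul, hminor]
  rw [hdet]
  have h2 : ((-1 : R)) ^ (m + 1 + 1) = (-1 : R) ^ m := by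
    rw [pow_succ, pow_succ]; ring
  have h3 : ((-1 : R)) ^ m * (-1 : R) ^ m = 1 := by
    rw [← pow_add, show m + m = 2 * m from by ring, pow_mul]
    norm_num
  rw [h2, mul_comm (j (m + 1)) ((-1 : R) ^ m), ← mul_assoc, h3, one_mul]
end

section
/- Let R be a commutative ring and let h, j : ℕ → R be sequences with h 0 = 1 and j 1 = 1 satisfying equation (D1): n·h_n = Σ_{r=1}^{n} j_r · h_{n-r} for all n ≥ 1. For n ≥ 1 let J_n(j̄) be the n×n matrix over R whose entry in row i and column k (1 ≤ i,k ≤ n) equals j_{i-k+1} if k ≤ i, equals -(i·1_R) if k = i+1, and equals 0 if k > i+1. Then for all n ≥ 1, (n!)·h_n = det(J_n(j̄)). -/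
/-- The matrix `J_n(j̄)`: entries `j (i - k + 1)` in (1-based) row `i`, column `k` for
`k ≤ i`, superdiagonal entry `-i` in row `i`, column `i + 1`, and `0` above the
superdiagonal. Indices are 0-based internally, so row `i` corresponds to `i.val + 1`. -/
def Jmat {R : Type*} [CommRing R] (j : ℕ → R) (n : ℕ) : Matrix (Fin n) (Fin n) R :=
  Matrix.of fun i k =>
    if (k : ℕ) ≤ (i : ℕ) then j ((i : ℕ) - (k : ℕ) + 1)
    else if (k : ℕ) = (i : ℕ) + 1 then -(((i : ℕ) + 1 : ℕ) : R)
    else 0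

/-- entry function independent of size -/
def Jent {R : Type*} [CommRing R] (j : ℕ → R) (a b : ℕ) : R :=
  if b ≤ a then j (a - b + 1) else if b = a + 1 then -((a + 1 : ℕ) : R) else 0

lemma Jmat_apply {R : Type*} [CommRing R] (j : ℕ → R) (n : ℕ) (i k : Fin n) :
    Jmat j n i k = Jent j (i : ℕ) (k : ℕ) := rfl

lemma coe_succAbove {n} (p : Fin (n+1)) (i : Fin n) :
    ((p.succAbove i : Fin (n+1)) : ℕ) = if (i:ℕ) < (p:ℕ) then (i:ℕ) else (i:ℕ)+1 := by
  rw [Fin.succAbove]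
  split_ifs with h h' h' <;> simp_all [Fin.lt_def]

lemma fact_mul_prod (k m : ℕ) (hkm : k ≤ m) :
    k.factorial * ∏ i ∈ Finset.Ico k m, (i+1) = m.factorial := by
  induction m with
  | zero => interval_cases k; simp
  | succ m ih =>
    rcases Nat.lt_or_ge k (m+1) with hcase | hcase
    · have h' : k ≤ m := Nat.lt_succ_iff.mp hcase
      rw [Finset.prod_Ico_succ_top h', ← mul_assoc, ih h', Nat.factorial_succ]
      ring
    · have : k = m + 1 := le_antisymm hkm hcase
      subst this
      simp

lemma minor_det {R : Type*} [CommRing R] (j : ℕ → R) :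
    ∀ (n : ℕ) (k : Fin (n+1)),
      ((Jmat j (n+1)).submatrix Fin.castSucc k.succAbove).det
        = (Jmat j (k : ℕ)).det * ∏ i ∈ Finset.Ico (k : ℕ) n, (-((i+1 : ℕ) : R)) := by
  intro n
  induction n with
  | zero =>
    intro k
    have hk : (k : ℕ) = 0 := by omega
    rw [hk]
    simp [Matrix.det_fin_zero]
  | succ m ih =>
    intro k
    rcases Nat.lt_or_ge (k : ℕ) (m+1) with hk | hk
    · -- k < m+1 : expand along last column
      set A := (Jmat j (m+2)).submatrix Fin.castSucc k.succAbove with hA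
      rw [Matrix.det_succ_column A (Fin.last m)]
      have hcol : ∀ i : Fin (m+1), A i (Fin.last m) =
          if i = Fin.last m then -((m+1 : ℕ) : R) else 0 := by
        intro i
        have hsa : ((k.succAbove (Fin.last m)) : ℕ) = m + 1 := by
          rw [coe_succAbove]
          simp only [Fin.val_last]
          rw [if_neg (by omega)]
        rw [hA]
        simp only [Matrix.submatrix_apply, Jmat_apply]
        rw [Fin.coe_castSucc, hsa, Jent]
        by_cases hi : i = Fin.last m
        · subst hi
          rw [if_pos rfl, if_neg (by simp only [Fin.val_last]; omega),
            if_pos (by simp only [Fin.val_last])]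
          simp only [Fin.val_last]
        · have hlt : (i : ℕ) < m := by
            have h1 := i.isLt
            rcases Nat.lt_or_ge (i : ℕ) m with hcc | hcc
            · exact hcc
            · exact absurd (Fin.ext (by simp [Fin.val_last]; omega)) hi
          rw [if_neg hi, if_neg (by omega), if_neg (by omega)]
      rw [Finset.sum_eq_single (Fin.last m)]
      rotate_left
      · intro b _ hb
        rw [hcol b, if_neg hb]
        ring
      · intro habs; exact absurd (Finset.mem_univ _) habs
      rw [hcol (Fin.last m), if_pos rfl]
      -- the remaining minor
      have hk' : (k : ℕ) < m + 1 := hk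
      set k' : Fin (m+1) := ⟨(k : ℕ), hk'⟩ with hk'def
      have hsub : A.submatrix (Fin.last m).succAbove (Fin.last m).succAbove
          = (Jmat j (m+1)).submatrix Fin.castSucc k'.succAbove := by
        rw [Fin.succAbove_last]
        ext r c
        simp only [Matrix.submatrix_apply, hA, Jmat_apply]
        congr 1
        rw [coe_succAbove, coe_succAbove, Fin.coe_castSucc]
      have hcoe : (k' : ℕ) = (k : ℕ) := rfl
      rw [hsub, ih k', hcoe, Finset.prod_Ico_succ_top (by omega : (k : ℕ) ≤ m)]
      have hpow : (-1 : R) ^ ((Fin.last m : ℕ) + ((Fin.last m) : ℕ)) = 1 := by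
        simp only [Fin.val_last]
        rw [← two_mul, pow_mul]
        norm_num
      rw [hpow]
      push_cast
      ring
    · -- k = last
      have hk2 : k = Fin.last (m+1) := Fin.ext (by simp [Fin.val_last]; omega)
      subst hk2
      have hsub : (Jmat j (m+2)).submatrix Fin.castSucc (Fin.last (m+1)).succAbove
          = Jmat j (m+1) := by
        ext r c
        rw [Fin.succAbove_last]
        simp only [Matrix.submatrix_apply, Jmat_apply, Fin.coe_castSucc]
      rw [hsub]
      simp

lemma key {R : Type*} [CommRing R] (h j : ℕ → R)
    (h0 : h 0 = 1) (j1 : j 1 = 1)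
    (hD : ∀ n : ℕ, 1 ≤ n → n • h n = ∑ r ∈ Finset.Icc 1 n, j r * h (n - r)) :
    ∀ n : ℕ, (Jmat j n).det = n.factorial • h n := by
  intro n
  induction n using Nat.strong_induction_on with
  | _ n ih =>
    match n with
    | 0 => simp [Matrix.det_fin_zero, h0]
    | Nat.succ m =>
      rw [Matrix.det_succ_row (Jmat j (m+1)) (Fin.last m)]
      have hterm : ∀ k : Fin (m+1),
          (-1 : R) ^ ((Fin.last m : ℕ) + (k : ℕ)) * Jmat j (m+1) (Fin.last m) k *
            ((Jmat j (m+1)).submatrix (Fin.last m).succAbove k.succAbove).det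
          = ((m.factorial : ℕ) : R) * (j (m - (k : ℕ) + 1) * h (k : ℕ)) := by
        intro k
        have hkm : (k : ℕ) ≤ m := by have := k.isLt; omega
        have hrow : Jmat j (m+1) (Fin.last m) k = j (m - (k : ℕ) + 1) := by
          rw [Jmat_apply, Jent]
          simp only [Fin.val_last]
          rw [if_pos hkm]
        have hmm : (Jmat j (m+1)).submatrix (Fin.last m).succAbove k.succAbove
            = (Jmat j (m+1)).submatrix Fin.castSucc k.succAbove := by
          rw [Fin.succAbove_last]
        rw [hrow, hmm, minor_det]
        have hik : (Jmat j (k : ℕ)).det = ((Nat.factorial (k : ℕ) : ℕ) : R) * h (k : ℕ) := by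
          rw [ih (k : ℕ) (by omega), nsmul_eq_mul]
        rw [hik]
        have hprod : ∏ i ∈ Finset.Ico (k : ℕ) m, (-((i+1 : ℕ) : R))
            = (-1 : R) ^ (m - (k : ℕ)) * ((∏ i ∈ Finset.Ico (k : ℕ) m, (i+1) : ℕ) : R) := by
          have hc : ∀ i ∈ Finset.Ico (k : ℕ) m, (-((i+1 : ℕ) : R)) = (-1) * ((i+1 : ℕ) : R) := by
            intro i _
            ring
          rw [Finset.prod_congr rfl hc, Finset.prod_mul_distrib, Finset.prod_const,
            Nat.card_Ico, Nat.cast_prod]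
        rw [hprod]
        have hfact : ((Nat.factorial (k : ℕ) : ℕ) : R) *
            ((∏ i ∈ Finset.Ico (k : ℕ) m, (i+1) : ℕ) : R) = ((m.factorial : ℕ) : R) := by
          rw [← Nat.cast_mul, fact_mul_prod (k : ℕ) m hkm]
        have hsign : (-1 : R) ^ ((Fin.last m : ℕ) + (k : ℕ)) * (-1 : R) ^ (m - (k : ℕ)) = 1 := by
          simp only [Fin.val_last]
          rw [← pow_add, show m + (k : ℕ) + (m - (k : ℕ)) = 2 * m by omega, pow_mul]
          norm_num
        calc (-1 : R) ^ ((Fin.last m : ℕ) + (k : ℕ)) * j (m - (k : ℕ) + 1) *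
              (((Nat.factorial (k : ℕ) : ℕ) : R) * h (k : ℕ) *
                ((-1 : R) ^ (m - (k : ℕ)) * ((∏ i ∈ Finset.Ico (k : ℕ) m, (i+1) : ℕ) : R)))
            = ((-1 : R) ^ ((Fin.last m : ℕ) + (k : ℕ)) * (-1 : R) ^ (m - (k : ℕ))) *
              (((Nat.factorial (k : ℕ) : ℕ) : R) *
                ((∏ i ∈ Finset.Ico (k : ℕ) m, (i+1) : ℕ) : R)) *
              (j (m - (k : ℕ) + 1) * h (k : ℕ)) := by ring
          _ = ((m.factorial : ℕ) : R) * (j (m - (k : ℕ) + 1) * h (k : ℕ)) := by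
              rw [hsign, hfact, one_mul]
      rw [Finset.sum_congr rfl (fun k _ => hterm k), ← Finset.mul_sum]
      have hsum : ∑ k : Fin (m+1), j (m - (k : ℕ) + 1) * h (k : ℕ)
          = ∑ r ∈ Finset.Icc 1 (m+1), j r * h (m+1-r) := by
        rw [Fin.sum_univ_eq_sum_range (fun k => j (m - k + 1) * h k)]
        refine Finset.sum_nbij' (fun k => m + 1 - k) (fun r => m + 1 - r) ?_ ?_ ?_ ?_ ?_
        · intro a ha
          simp only [Finset.mem_range] at ha
          simp only [Finset.mem_Icc]
          omega
        · intro a ha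
          simp only [Finset.mem_Icc] at ha
          simp only [Finset.mem_range]
          omega
        · intro a ha
          simp only [Finset.mem_range] at ha
          show m + 1 - (m + 1 - a) = a
          omega
        · intro a ha
          simp only [Finset.mem_Icc] at ha
          show m + 1 - (m + 1 - a) = a
          omega
        · intro a ha
          simp only [Finset.mem_range] at ha
          have h1 : m - a + 1 = m + 1 - a := by omega
          have h2 : m + 1 - (m + 1 - a) = a := by omega
          rw [h1, h2]
      rw [hsum, ← hD (m+1) (by omega), nsmul_eq_mul, nsmul_eq_mul]
      push_cast [Nat.factorial_succ]
      ring

/-- Lemma 2.2, equation (2): if `h 0 = 1`, `j 1 = 1` and (D1) holds, then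
`n! • h n = det (J_n(j̄))` for all `n ≥ 1`. -/
theorem factorial_smul_h_eq_det_Jmat {R : Type*} [CommRing R] (h j : ℕ → R)
    (h0 : h 0 = 1) (j1 : j 1 = 1)
    (hD : ∀ n : ℕ, 1 ≤ n → n • h n = ∑ r ∈ Finset.Icc 1 n, j r * h (n - r)) :
    ∀ n : ℕ, 1 ≤ n → n.factorial • h n = (Jmat j n).det := by
  intro n _
  exact (key h j h0 j1 hD n).symm
end

section
/- Let R be a commutative ring and let h, j : ℕ → R be sequences with h 0 = 1 and j 1 = 1 satisfying equation (D1): n·h_n = Σ_{r=1}^{n} j_r · h_{n-r} for all n ≥ 1. For n ≥ 1 let J_n(j̄) be the n×n matrix over R whose entry in row i and column k (1 ≤ i,k ≤ n) equals j_{i-k+1} if k ≤ i, equals -(i·1_R) if k = i+1, and equals 0 if k > i+1. Then for every 0 ≤ k ≤ n, the coefficient of x^{n-k} in the characteristic polynomial χ(J_n(j̄))(x) equals (-1)^k · (k!) · C(n,k) · h_k. -/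
open Polynomial

namespace CharJAux

variable {R : Type*} [CommRing R] (j : ℕ → R)

/-- ℕ-indexed entry function for the characteristic matrix of `Jmat`. -/
noncomputable def E (i k : ℕ) : R[X] :=
  if i = k then X - C (j 1)
  else if k ≤ i then -C (j (i - k + 1))
  else if k = i + 1 then C ((i + 1 : ℕ) : R)
  else 0

lemma Jmat_apply (n : ℕ) (i k : Fin n) :
    Jmat j n i k =
      if (k : ℕ) ≤ (i : ℕ) then j ((i : ℕ) - (k : ℕ) + 1)
      else if (k : ℕ) = (i : ℕ) + 1 then -(((i : ℕ) + 1 : ℕ) : R)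
      else 0 := rfl

lemma cm_eq (n : ℕ) (i k : Fin n) :
    Matrix.charmatrix (Jmat j n) i k = E j (i : ℕ) (k : ℕ) := by
  unfold E
  by_cases h : i = k
  · subst h
    rw [Matrix.charmatrix_apply_eq, Jmat_apply, if_pos le_rfl, if_pos rfl,
      Nat.sub_self]
  · have h' : (i : ℕ) ≠ (k : ℕ) := fun hc => h (Fin.ext hc)
    rw [Matrix.charmatrix_apply_ne _ _ _ h, Jmat_apply, if_neg h']
    by_cases hle : (k : ℕ) ≤ (i : ℕ)
    · rw [if_pos hle, if_pos hle]
    · rw [if_neg hle, if_neg hle]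
      by_cases he : (k : ℕ) = (i : ℕ) + 1
      · rw [if_pos he, if_pos he, map_neg, neg_neg, map_natCast]
      · rw [if_neg he, if_neg he, map_zero, neg_zero]

noncomputable def D (n : ℕ) : R[X] := (Jmat j n).charpoly

/-- The modified matrix: top `m` rows are those of the characteristic matrix,
last row is `(-j (t+m), ..., -j t)`. -/
noncomputable def Fm (t m : ℕ) : Matrix (Fin (m + 1)) (Fin (m + 1)) R[X] :=
  Matrix.of fun i k =>
    if (i : ℕ) = m then -C (j (t + m - (k : ℕ))) else E j (i : ℕ) (k : ℕ)

noncomputable def F (t m : ℕ) : R[X] := (Fm j t m).det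

lemma D_zero : D j 0 = 1 := by
  unfold D Matrix.charpoly
  exact Matrix.det_isEmpty

lemma D_one : D j 1 = X - C (j 1) := by
  unfold D Matrix.charpoly
  rw [Matrix.det_fin_one, cm_eq]
  simp [E]

lemma F_zero (t : ℕ) : F j t 0 = -C (j t) := by
  unfold F
  rw [Matrix.det_fin_one]
  simp [Fm]

lemma coe_succAbove_penult {m : ℕ} (a : Fin (m + 1)) :
    ((((Fin.last m).castSucc : Fin (m + 2)).succAbove a : Fin (m + 2)) : ℕ) =
      if (a : ℕ) < m then (a : ℕ) else (a : ℕ) + 1 := by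
  by_cases h : (a : ℕ) < m
  · rw [Fin.succAbove_of_castSucc_lt _ a (by simp [Fin.lt_def, h]), if_pos h]
    simp
  · rw [Fin.succAbove_of_le_castSucc _ a (by simp [Fin.le_def]; omega), if_neg h]
    simp

/-- Laplace expansion along the last column for a matrix whose last column
vanishes except possibly in the last two rows. -/
lemma det_expand_last {S : Type*} [CommRing S] {m : ℕ}
    (A : Matrix (Fin (m + 2)) (Fin (m + 2)) S)
    (hz : ∀ i : Fin (m + 2), (i : ℕ) < m → A i (Fin.last (m + 1)) = 0) :
    A.det =
      -(A ((Fin.last m).castSucc) (Fin.last (m + 1)) *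
          (A.submatrix ((Fin.last m).castSucc : Fin (m + 2)).succAbove Fin.castSucc).det)
        + A (Fin.last (m + 1)) (Fin.last (m + 1)) *
          (A.submatrix Fin.castSucc Fin.castSucc).det := by
  rw [Matrix.det_succ_column A (Fin.last (m + 1))]
  simp only [Fin.succAbove_last]
  rw [Fin.sum_univ_castSucc, Fin.sum_univ_castSucc]
  have hs : ∀ i : Fin m,
      (-1 : S) ^ (((i.castSucc.castSucc : Fin (m + 2)) : ℕ) + ((Fin.last (m + 1) : Fin (m+2)) : ℕ))
          * A i.castSucc.castSucc (Fin.last (m + 1)) *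
          (A.submatrix (i.castSucc.castSucc : Fin (m + 2)).succAbove Fin.castSucc).det = 0 := by
    intro i
    rw [hz _ (by simp [i.isLt])]
    ring
  rw [Finset.sum_eq_zero fun i _ => hs i, zero_add, Fin.succAbove_last]
  have h1 : (((Fin.last m).castSucc : Fin (m + 2)) : ℕ) = m := by simp
  have h2 : ((Fin.last (m + 1) : Fin (m + 2)) : ℕ) = m + 1 := rfl
  rw [h1, h2]
  have hodd : (-1 : S) ^ (m + (m + 1)) = -1 := Odd.neg_one_pow ⟨m, by ring⟩
  have heven : (-1 : S) ^ ((m + 1) + (m + 1)) = 1 := Even.neg_one_pow ⟨m + 1, rfl⟩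
  rw [hodd, heven]
  ring

lemma Fm_apply (t m : ℕ) (i k : Fin (m + 1)) :
    Fm j t m i k =
      if (i : ℕ) = m then -C (j (t + m - (k : ℕ))) else E j (i : ℕ) (k : ℕ) := rfl

lemma E_high (i k : ℕ) (h : i + 1 < k) : E (R := R) j i k = 0 := by
  unfold E
  rw [if_neg (by omega), if_neg (by omega), if_neg (by omega)]

lemma E_supdiag (i : ℕ) : E (R := R) j i (i + 1) = C ((i + 1 : ℕ) : R) := by
  unfold E
  rw [if_neg (by omega), if_neg (by omega), if_pos rfl]

lemma E_diag (i : ℕ) : E (R := R) j i i = X - C (j 1) := by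
  unfold E
  rw [if_pos rfl]

lemma E_low (i k : ℕ) (h : k ≤ i) : E (R := R) j i k = if i = k then X - C (j 1) else -C (j (i - k + 1)) := by
  unfold E
  by_cases he : i = k
  · rw [if_pos he, if_pos he]
  · rw [if_neg he, if_pos h, if_neg he]

lemma F_succ (t m : ℕ) :
    F j t (m + 1) = -C (j t) * D j (m + 1) - C ((m + 1 : ℕ) : R) * F j (t + 1) m := by
  unfold F D Matrix.charpoly
  rw [det_expand_last]
  · have e1 : Fm j t (m + 1) ((Fin.last m).castSucc) (Fin.last (m + 1)) =
        C ((m + 1 : ℕ) : R) := by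
      rw [Fm_apply, if_neg (by simp), Fin.coe_castSucc, Fin.val_last, Fin.val_last, E_supdiag]
    have e2 : Fm j t (m + 1) (Fin.last (m + 1)) (Fin.last (m + 1)) = -C (j t) := by
      rw [Fm_apply, if_pos (by simp), Fin.val_last]
      have : t + (m + 1) - (m + 1) = t := by omega
      rw [this]
    have e3 : (Fm j t (m + 1)).submatrix Fin.castSucc Fin.castSucc =
        Matrix.charmatrix (Jmat j (m + 1)) := by
      ext a b : 2
      rw [Matrix.submatrix_apply, cm_eq, Fm_apply, if_neg (by simp; omega), Fin.coe_castSucc,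
        Fin.coe_castSucc]
    have e4 : (Fm j t (m + 1)).submatrix ((Fin.last m).castSucc : Fin (m + 2)).succAbove
        Fin.castSucc = Fm j (t + 1) m := by
      ext a b : 2
      rw [Matrix.submatrix_apply, Fm_apply, Fm_apply]
      rw [show ((((Fin.last m).castSucc : Fin (m + 2)).succAbove a : Fin (m + 2)) : ℕ)
            = if (a : ℕ) < m then (a : ℕ) else (a : ℕ) + 1 from coe_succAbove_penult a]
      by_cases ha : (a : ℕ) < m
      · rw [if_pos ha, if_neg (by omega), if_neg (by omega), Fin.coe_castSucc]
      · have ham : (a : ℕ) = m := by omega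
        rw [if_neg ha, if_pos (by omega), if_pos ham, Fin.coe_castSucc]
        have : t + (m + 1) - (b : ℕ) = t + 1 + m - (b : ℕ) := by omega
        rw [this]
    rw [e1, e2, e3, e4]
    ring
  · intro i hi
    rw [Fm_apply, if_neg (by omega), Fin.val_last, E_high _ _ _ (by omega)]

lemma D_rec (n : ℕ) :
    D j (n + 2) = (X - C (j 1)) * D j (n + 1) - C ((n + 1 : ℕ) : R) * F j 2 n := by
  unfold F D Matrix.charpoly
  rw [det_expand_last]
  · have e1 : Matrix.charmatrix (Jmat j (n + 2)) ((Fin.last n).castSucc) (Fin.last (n + 1)) =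
        C ((n + 1 : ℕ) : R) := by
      rw [cm_eq]
      simp only [Fin.coe_castSucc, Fin.val_last]
      exact E_supdiag j n
    have e2 : Matrix.charmatrix (Jmat j (n + 2)) (Fin.last (n + 1)) (Fin.last (n + 1)) =
        X - C (j 1) := by
      rw [cm_eq, Fin.val_last, E_diag]
    have e3 : (Matrix.charmatrix (Jmat j (n + 2))).submatrix Fin.castSucc Fin.castSucc =
        Matrix.charmatrix (Jmat j (n + 1)) := by
      ext a b : 2
      rw [Matrix.submatrix_apply, cm_eq, cm_eq, Fin.coe_castSucc, Fin.coe_castSucc]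
    have e4 : (Matrix.charmatrix (Jmat j (n + 2))).submatrix
        ((Fin.last n).castSucc : Fin (n + 2)).succAbove Fin.castSucc = Fm j 2 n := by
      ext a b : 2
      rw [Matrix.submatrix_apply, cm_eq, Fm_apply]
      rw [show ((((Fin.last n).castSucc : Fin (n + 2)).succAbove a : Fin (n + 2)) : ℕ)
            = if (a : ℕ) < n then (a : ℕ) else (a : ℕ) + 1 from coe_succAbove_penult a]
      by_cases ha : (a : ℕ) < n
      · rw [if_pos ha, if_neg (by omega), Fin.coe_castSucc]
      · have ham : (a : ℕ) = n := by omega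
        rw [if_neg ha, if_pos ham, Fin.coe_castSucc,
          E_low _ _ _ (by omega), if_neg (by omega)]
        have : (a : ℕ) + 1 - (b : ℕ) + 1 = 2 + n - (b : ℕ) := by omega
        rw [this]
    rw [e1, e2, e3, e4]
    ring
  · intro i hi
    rw [cm_eq, Fin.val_last, E_high _ _ _ (by omega)]

lemma F_closed (t m : ℕ) :
    F j t m = ∑ i ∈ Finset.range (m + 1),
      C ((-1 : R) ^ (i + 1) * ((m.descFactorial i : ℕ) : R) * j (t + i)) * D j (m - i) := by
  induction m generalizing t with
  | zero =>
    rw [F_zero, Finset.sum_range_one]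
    simp [D_zero]
  | succ m IH =>
    rw [F_succ, IH (t + 1)]
    conv_rhs => rw [Finset.sum_range_succ']
    rw [Finset.mul_sum]
    have h0' : C ((-1 : R) ^ (0 + 1) * (((m + 1).descFactorial 0 : ℕ) : R) * j (t + 0)) *
        D j (m + 1 - 0) = -C (j t) * D j (m + 1) := by
      simp
    rw [h0']
    have key : ∀ i ∈ Finset.range (m + 1),
        C ((-1 : R) ^ (i + 1 + 1) * ((((m + 1).descFactorial (i + 1) : ℕ)) : R) * j (t + (i + 1)))
            * D j (m + 1 - (i + 1)) =
          -(C ((m + 1 : ℕ) : R) *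
            (C ((-1 : R) ^ (i + 1) * ((m.descFactorial i : ℕ) : R) * j (t + 1 + i)) *
              D j (m - i))) := by
      intro i _
      have e1 : (m + 1).descFactorial (i + 1) = (m + 1) * m.descFactorial i :=
        Nat.succ_descFactorial_succ m i
      have e2 : m + 1 - (i + 1) = m - i := by omega
      have e3 : t + (i + 1) = t + 1 + i := by omega
      rw [e1, e2, e3]
      push_cast
      simp only [map_mul, map_pow, map_neg, map_one, map_natCast]
      ring
    rw [Finset.sum_congr rfl key, Finset.sum_neg_distrib, ← Finset.mul_sum]
    ring

lemma D_rec' (n : ℕ) :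
    D j (n + 2) = X * D j (n + 1) + ∑ s ∈ Finset.range (n + 2),
      C ((-1 : R) ^ (s + 1) * (((n + 1).descFactorial s : ℕ) : R) * j (s + 1)) *
        D j (n + 1 - s) := by
  rw [D_rec, F_closed]
  conv_rhs => rw [Finset.sum_range_succ']
  rw [Finset.mul_sum]
  have h0' : C ((-1 : R) ^ (0 + 1) * (((n + 1).descFactorial 0 : ℕ) : R) * j (0 + 1)) *
      D j (n + 1 - 0) = -C (j 1) * D j (n + 1) := by
    simp
  rw [h0']
  have key : ∀ s ∈ Finset.range (n + 1),
      C ((-1 : R) ^ (s + 1 + 1) * ((((n + 1).descFactorial (s + 1) : ℕ)) : R) * j (s + 1 + 1))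
          * D j (n + 1 - (s + 1)) =
        -(C ((n + 1 : ℕ) : R) *
          (C ((-1 : R) ^ (s + 1) * ((n.descFactorial s : ℕ) : R) * j (2 + s)) *
            D j (n - s))) := by
    intro s _
    have e1 : (n + 1).descFactorial (s + 1) = (n + 1) * n.descFactorial s :=
      Nat.succ_descFactorial_succ n s
    have e2 : n + 1 - (s + 1) = n - s := by omega
    have e3 : s + 1 + 1 = 2 + s := by omega
    rw [e1, e2, e3]
    push_cast
    simp only [map_mul, map_pow, map_neg, map_one, map_natCast]
    ring
  rw [Finset.sum_congr rfl key, Finset.sum_neg_distrib, ← Finset.mul_sum]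
  ring

lemma choose_id (m k' : ℕ) (hk : k' + 1 ≤ m + 2) :
    (k' + 1).factorial * (m + 2).choose (k' + 1) =
      (k' + 1).factorial * (m + 1).choose (k' + 1) + (m + 1).descFactorial k' * (k' + 1) := by
  rw [← Nat.descFactorial_eq_factorial_mul_choose, ← Nat.descFactorial_eq_factorial_mul_choose,
    Nat.succ_descFactorial_succ, Nat.descFactorial_succ]
  rw [show m + 2 = (m + 1 - k') + (k' + 1) by omega, add_mul, mul_comm ((m+1).descFactorial k')]

lemma main {R : Type*} [CommRing R] [Nontrivial R] (h j : ℕ → R)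
    (h0 : h 0 = 1) (j1 : j 1 = 1)
    (hD : ∀ n : ℕ, 1 ≤ n → n • h n = ∑ r ∈ Finset.Icc 1 n, j r * h (n - r)) :
    ∀ n k : ℕ, k ≤ n → (D j n).coeff (n - k) =
      (-1 : R) ^ k * ((k.factorial * n.choose k : ℕ) : R) * h k := by
  have h1 : h 1 = 1 := by
    have := hD 1 le_rfl
    simpa [j1, h0] using this
  have hnd : ∀ p : ℕ, (D (R := R) j p).natDegree = p := by
    intro p
    unfold D
    rw [Matrix.charpoly_natDegree_eq_dim, Fintype.card_fin]
  intro n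
  induction n using Nat.strong_induction_on with
  | _ n IH =>
    match n with
    | 0 =>
      intro k hk
      interval_cases k
      simp [D_zero, h0]
    | 1 =>
      intro k hk
      interval_cases k
      · simp [D_one, h0]
      · simp [D_one, j1, h1]
    | (m + 2) =>
      intro k hk
      rw [D_rec', Polynomial.coeff_add, Polynomial.finset_sum_coeff]
      simp only [Polynomial.coeff_C_mul]
      have hX : (X * D j (m + 1)).coeff (m + 2 - k) =
          (if k ≤ m + 1 then (-1 : R) ^ k * ((k.factorial * (m + 1).choose k : ℕ) : R) * h k
           else 0) := by
        by_cases hk1 : k ≤ m + 1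
        · rw [if_pos hk1, show m + 2 - k = (m + 1 - k) + 1 by omega, Polynomial.coeff_X_mul,
            IH (m + 1) (by omega) k hk1]
        · rw [if_neg hk1, show m + 2 - k = 0 by omega, Polynomial.mul_coeff_zero,
            Polynomial.coeff_X_zero, zero_mul]
      rw [hX]
      -- the sum: terms with s ≥ k vanish
      have hterm0 : ∀ s ∈ Finset.range (m + 2), s ∉ Finset.range k →
          (-1 : R) ^ (s + 1) * (((m + 1).descFactorial s : ℕ) : R) * j (s + 1) *
            (D j (m + 1 - s)).coeff (m + 2 - k) = 0 := by
        intro s hs hs'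
        have hks : k ≤ s := by simpa using hs'
        have hs2 : s < m + 2 := Finset.mem_range.1 hs
        have : (D (R := R) j (m + 1 - s)).coeff (m + 2 - k) = 0 := by
          apply Polynomial.coeff_eq_zero_of_natDegree_lt
          rw [hnd]
          omega
        rw [this, mul_zero]
      rw [← Finset.sum_subset (Finset.range_subset_range.2 (by omega : k ≤ m + 2))
        (fun s hs hs' => hterm0 s hs hs')]
      have hterm : ∀ s ∈ Finset.range k,
          (-1 : R) ^ (s + 1) * (((m + 1).descFactorial s : ℕ) : R) * j (s + 1) *
            (D j (m + 1 - s)).coeff (m + 2 - k) =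
          (-1 : R) ^ k * (((m + 1).descFactorial (k - 1) : ℕ) : R) *
            (j (s + 1) * h (k - (s + 1))) := by
        intro s hs
        have hsk : s < k := Finset.mem_range.1 hs
        have hcoeff : (D (R := R) j (m + 1 - s)).coeff (m + 2 - k) =
            (-1 : R) ^ (k - 1 - s) *
              (((k - 1 - s).factorial * (m + 1 - s).choose (k - 1 - s) : ℕ) : R) *
              h (k - 1 - s) := by
          rw [show m + 2 - k = (m + 1 - s) - (k - 1 - s) by omega]
          exact IH (m + 1 - s) (by omega) (k - 1 - s) (by omega)
        rw [hcoeff]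
        have hdf : (m + 1).descFactorial s *
            ((k - 1 - s).factorial * (m + 1 - s).choose (k - 1 - s)) =
            (m + 1).descFactorial (k - 1) := by
          rw [← Nat.descFactorial_eq_factorial_mul_choose, mul_comm]
          exact Nat.descFactorial_mul_descFactorial (show s ≤ k - 1 by omega)
        have hsign : (-1 : R) ^ (s + 1) * (-1 : R) ^ (k - 1 - s) = (-1 : R) ^ k := by
          rw [← pow_add, show s + 1 + (k - 1 - s) = k by omega]
        calc (-1 : R) ^ (s + 1) * (((m + 1).descFactorial s : ℕ) : R) * j (s + 1) *
              ((-1 : R) ^ (k - 1 - s) *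
                (((k - 1 - s).factorial * (m + 1 - s).choose (k - 1 - s) : ℕ) : R) *
                h (k - 1 - s))
            = ((-1 : R) ^ (s + 1) * (-1 : R) ^ (k - 1 - s)) *
              ((((m + 1).descFactorial s *
                ((k - 1 - s).factorial * (m + 1 - s).choose (k - 1 - s)) : ℕ)) : R) *
              (j (s + 1) * h (k - 1 - s)) := by push_cast; ring
          _ = (-1 : R) ^ k * (((m + 1).descFactorial (k - 1) : ℕ) : R) *
              (j (s + 1) * h (k - (s + 1))) := by
              rw [hsign, hdf, show k - 1 - s = k - (s + 1) by omega]
      rw [Finset.sum_congr rfl hterm, ← Finset.mul_sum]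
      have hIcc : ∑ s ∈ Finset.range k, j (s + 1) * h (k - (s + 1)) =
          ∑ r ∈ Finset.Icc 1 k, j r * h (k - r) := by
        rw [← Finset.Ico_add_one_right_eq_Icc, Finset.sum_Ico_eq_sum_range]
        apply Finset.sum_congr rfl
        intro s _
        rw [show 1 + s = s + 1 by omega]
      by_cases hk0 : k = 0
      · subst hk0
        simp
      · rw [hIcc, ← hD k (by omega)]
        obtain ⟨k', rfl⟩ : ∃ k', k = k' + 1 := ⟨k - 1, by omega⟩
        rw [nsmul_eq_mul]
        by_cases hk1 : k' + 1 ≤ m + 1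
        · rw [if_pos hk1]
          have := choose_id m k' hk
          calc (-1 : R) ^ (k' + 1) * (((k' + 1).factorial * (m + 1).choose (k' + 1) : ℕ) : R) *
                h (k' + 1) +
                (-1 : R) ^ (k' + 1) * (((m + 1).descFactorial ((k' + 1) - 1) : ℕ) : R) *
                  (((k' + 1 : ℕ) : R) * h (k' + 1))
              = (-1 : R) ^ (k' + 1) *
                ((((k' + 1).factorial * (m + 1).choose (k' + 1) +
                  (m + 1).descFactorial k' * (k' + 1) : ℕ)) : R) * h (k' + 1) := by
                push_cast; ring
            _ = _ := by rw [← this]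
        · rw [if_neg hk1]
          have hkm : k' + 1 = m + 2 := by omega
          have hch : (m + 1).choose (k' + 1) = 0 := Nat.choose_eq_zero_of_lt (by omega)
          have := choose_id m k' hk
          rw [hch, Nat.mul_zero, Nat.zero_add] at this
          calc (0 : R) + (-1 : R) ^ (k' + 1) *
                (((m + 1).descFactorial ((k' + 1) - 1) : ℕ) : R) *
                  (((k' + 1 : ℕ) : R) * h (k' + 1))
              = (-1 : R) ^ (k' + 1) *
                ((((m + 1).descFactorial k' * (k' + 1) : ℕ)) : R) * h (k' + 1) := by
                push_cast; ring
            _ = _ := by rw [← this]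

end CharJAux

/-- If `h 0 = 1`, `j 1 = 1` and (D1) holds, then for `0 ≤ k ≤ n` the coefficient of
`x^(n-k)` in the characteristic polynomial of `J_n(j̄)` is `(-1)^k * k! * C(n,k) • h k`. -/
theorem charpoly_coeff_Jmat {R : Type*} [CommRing R] (h j : ℕ → R)
    (h0 : h 0 = 1) (j1 : j 1 = 1)
    (hD : ∀ n : ℕ, 1 ≤ n → n • h n = ∑ r ∈ Finset.Icc 1 n, j r * h (n - r))
    (n : ℕ) (hn : 1 ≤ n) (k : ℕ) (hk : k ≤ n) :
    ((Jmat j n).charpoly).coeff (n - k) =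
      (-1 : R) ^ k * (k.factorial * n.choose k) • h k := by
  nontriviality R
  have := CharJAux.main h j h0 j1 hD n k hk
  rw [nsmul_eq_mul]
  calc ((Jmat j n).charpoly).coeff (n - k) = (CharJAux.D j n).coeff (n - k) := rfl
    _ = (-1 : R) ^ k * ((k.factorial * n.choose k : ℕ) : R) * h k := this
    _ = _ := by push_cast; ring
end

section
/- Let R be a commutative ring and let h, j : ℕ → R be sequences with h 0 = 1 and j 1 = 1 satisfying equation (D1): n·h_n = Σ_{r=1}^{n} j_r · h_{n-r} for all n ≥ 1. For n ≥ 1 let J_n(j̄) be the n×n matrix over R whose entry in row i and column k (1 ≤ i,k ≤ n) equals j_{i-k+1} if k ≤ i, equals -(i·1_R) if k = i+1, and equals 0 if k > i+1. Then the constant term of the characteristic polynomial of J_n(j̄) equals (-1)^n · (n!) · h_n; equivalently, χ(J_n(j̄))(0) = (-1)^n · (n!) · h_n. -/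
/-!
`χ(J)(0) = (-1)ⁿ det J`, so it suffices to show `det J_n = n! h_n`. The matrix `J_n` is lower
Hessenberg; expanding along the last row, deleting row `N` and column `c` of `J_{N+1}` leaves a
block triangular matrix with diagonal blocks `J_c` and the superdiagonal entries
`-(c+1), …, -N`. Hence `det J_{N+1} = ∑_c j_{N-c+1} (N!/c!) det J_c`, which by induction is
`N! ∑_c j_{N-c+1} h_c = N! (N+1) h_{N+1}` by (D1).
-/

open Polynomial

namespace Fin

lemma val_succAbove {n : ℕ} (p : Fin (n + 1)) (i : Fin n) :
    (p.succAbove i : ℕ) = if (i : ℕ) < p then (i : ℕ) else i + 1 := by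
  rcases lt_or_ge (i : ℕ) p with h | h
  · rw [succAbove_of_castSucc_lt _ _ h, if_pos h, val_castSucc]
  · rw [succAbove_of_le_castSucc _ _ h, if_neg (not_lt.2 h), val_succ]

end Fin

lemma sum_fin_reflect_eq_sum_Icc {M : Type*} [AddCommMonoid M] (f : ℕ → ℕ → M) (N : ℕ) :
    ∑ c : Fin (N + 1), f (N - c + 1) c = ∑ r ∈ Finset.Icc 1 (N + 1), f r (N + 1 - r) := by
  rw [Fin.sum_univ_eq_sum_range (fun c => f (N - c + 1) c)]
  refine Finset.sum_nbij' (fun c => N - c + 1) (fun r => N + 1 - r) ?_ ?_ ?_ ?_ ?_ <;>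
    intro c hc <;> simp only [Finset.mem_range, Finset.mem_Icc] at hc ⊢
  all_goals first | omega | congr 1; omega

lemma factorial_mul_prod_Ico_succ {c N : ℕ} (h : c ≤ N) :
    c.factorial * ∏ i ∈ Finset.Ico c N, (i + 1) = N.factorial := by
  induction N, h using Nat.le_induction with
  | base => simp
  | succ N h ih => rw [Finset.prod_Ico_succ_top h, ← mul_assoc, ih, Nat.factorial_succ, mul_comm]

namespace Matrix

variable {R : Type*} [CommRing R]

def leadingBlock (A : ℕ → ℕ → R) (n : ℕ) : Matrix (Fin n) (Fin n) R :=
  of fun i k => A i k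

def IsLowerHessenberg (A : ℕ → ℕ → R) : Prop :=
  ∀ i k, i + 1 < k → A i k = 0

variable {A : ℕ → ℕ → R}

theorem det_leadingBlock_submatrix_succAbove (hA : IsLowerHessenberg A) (N : ℕ)
    (c : Fin (N + 1)) :
    ((leadingBlock A (N + 1)).submatrix Fin.castSucc c.succAbove).det =
      (∏ i ∈ Finset.Ico (c : ℕ) N, A i (i + 1)) * (leadingBlock A c).det := by
  induction N with
  | zero =>
    obtain rfl : c = 0 := Fin.fin_one_eq_zero c
    simp
  | succ N ih =>
    rcases Fin.eq_castSucc_or_eq_last c with ⟨c, rfl⟩ | rfl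
    · set B := (leadingBlock A (N + 2)).submatrix Fin.castSucc c.castSucc.succAbove
      have hc : (c : ℕ) ≤ N := Nat.lt_succ_iff.mp c.isLt
      have hlast : B (Fin.last N) (Fin.last N) = A N (N + 1) := by
        simp [B, leadingBlock]
      have hcol : ∀ i, i ≠ Fin.last N → B i (Fin.last N) = 0 := fun i hi => by
        have hi : (i : ℕ) < N := Fin.val_lt_last hi
        refine hA _ _ ?_
        rw [Fin.val_succAbove, if_neg (by simp; omega)]
        simp only [Fin.val_castSucc, Fin.val_last]
        omega
      have hminor : B.submatrix Fin.castSucc Fin.castSucc =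
          (leadingBlock A (N + 1)).submatrix Fin.castSucc c.succAbove := by
        ext i k
        simp [B, leadingBlock, Fin.val_succAbove]
      rw [det_succ_column B (Fin.last N), Finset.sum_eq_single (Fin.last N)
        (fun i _ hi => by rw [hcol i hi, mul_zero, zero_mul]) (by simp),
        Fin.succAbove_last, hminor, ih, Fin.val_castSucc, Finset.prod_Ico_succ_top hc, hlast]
      simp only [Fin.val_last, ← two_mul, pow_mul, even_two, Even.neg_pow, one_pow, one_mul]
      ring
    · simp [Fin.succAbove_last]
      rfl

theorem det_leadingBlock_succ (hA : IsLowerHessenberg A) (N : ℕ) :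
    (leadingBlock A (N + 1)).det =
      ∑ c : Fin (N + 1), A N c * (∏ i ∈ Finset.Ico (c : ℕ) N, -A i (i + 1)) *
        (leadingBlock A c).det := by
  rw [det_succ_row _ (Fin.last N)]
  refine Finset.sum_congr rfl fun c _ => ?_
  have hc : (c : ℕ) ≤ N := Nat.lt_succ_iff.mp c.isLt
  rw [Fin.succAbove_last, det_leadingBlock_submatrix_succAbove hA, Finset.prod_neg,
    Nat.card_Ico, Fin.val_last, show N + c = (N - c) + 2 * c by omega, pow_add, pow_mul]
  simp only [even_two, Even.neg_pow, one_pow, mul_one, leadingBlock, of_apply, Fin.val_last]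
  ring

end Matrix

section

variable {R : Type*} [CommRing R] (j : ℕ → R)

def JmatEntry (a b : ℕ) : R :=
  if b ≤ a then j (a - b + 1) else if b = a + 1 then -((a + 1 : ℕ) : R) else 0

lemma Jmat_eq_leadingBlock (n : ℕ) : Jmat j n = Matrix.leadingBlock (JmatEntry j) n := rfl

lemma JmatEntry_of_le {a b : ℕ} (h : b ≤ a) : JmatEntry j a b = j (a - b + 1) := if_pos h

lemma JmatEntry_succ (a : ℕ) : JmatEntry j a (a + 1) = -((a + 1 : ℕ) : R) := by
  rw [JmatEntry, if_neg (by omega), if_pos rfl]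

lemma isLowerHessenberg_JmatEntry : Matrix.IsLowerHessenberg (JmatEntry j) := fun a b h => by
  rw [JmatEntry, if_neg (by omega), if_neg (by omega)]

theorem det_Jmat (h : ℕ → R) (h0 : h 0 = 1)
    (hD : ∀ n : ℕ, 1 ≤ n → n • h n = ∑ r ∈ Finset.Icc 1 n, j r * h (n - r)) (N : ℕ) :
    (Jmat j N).det = N.factorial • h N := by
  induction N using Nat.strong_induction_on with
  | _ N ih =>
  rcases N with _ | M
  · simp [h0]
  have hterm : ∀ c : Fin (M + 1), JmatEntry j M c *
      (∏ i ∈ Finset.Ico (c : ℕ) M, -JmatEntry j i (i + 1)) * (Jmat j c).det =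
      M.factorial * (j (M - c + 1) * h c) := fun c => by
    have hc : (c : ℕ) ≤ M := Nat.lt_succ_iff.mp c.isLt
    rw [ih c (by omega), nsmul_eq_mul]
    simp only [JmatEntry_of_le j hc, JmatEntry_succ j, neg_neg]
    rw [← Nat.cast_prod, ← factorial_mul_prod_Ico_succ hc, Nat.cast_mul]
    ring
  rw [Jmat_eq_leadingBlock, Matrix.det_leadingBlock_succ (isLowerHessenberg_JmatEntry j)]
  simp only [← Jmat_eq_leadingBlock, hterm, ← Finset.mul_sum,
    sum_fin_reflect_eq_sum_Icc (fun r c => j r * h c)]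
  rw [← hD (M + 1) (by omega), nsmul_eq_mul, nsmul_eq_mul, Nat.factorial_succ]
  push_cast
  ring

end

theorem charpoly_constantTerm_Jmat_general {R : Type*} [CommRing R] (h j : ℕ → R)
    (h0 : h 0 = 1)
    (hD : ∀ n : ℕ, 1 ≤ n → n • h n = ∑ r ∈ Finset.Icc 1 n, j r * h (n - r))
    (n : ℕ) :
    ((Jmat j n).charpoly).coeff 0 = (-1 : R) ^ n * n.factorial • h n ∧
      ((Jmat j n).charpoly).eval 0 = (-1 : R) ^ n * n.factorial • h n := by
  have hcoeff : ((Jmat j n).charpoly).coeff 0 = (-1 : R) ^ n * n.factorial • h n := by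
    rw [← det_Jmat j h h0 hD n, Matrix.det_eq_sign_charpoly_coeff, Fintype.card_fin,
      ← mul_assoc, ← pow_add, ← two_mul, pow_mul, neg_one_sq, one_pow, one_mul]
  exact ⟨hcoeff, by rw [← coeff_zero_eq_eval_zero, hcoeff]⟩

/-- If `h 0 = 1`, `j 1 = 1` and (D1) holds, then the constant term of the characteristic
polynomial of `J_n(j̄)` equals `(-1)^n * n! • h n`; equivalently, evaluating the
characteristic polynomial at `0` gives `(-1)^n * n! • h n`. -/
theorem charpoly_constantTerm_Jmat {R : Type*} [CommRing R] (h j : ℕ → R)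
    (h0 : h 0 = 1) (j1 : j 1 = 1)
    (hD : ∀ n : ℕ, 1 ≤ n → n • h n = ∑ r ∈ Finset.Icc 1 n, j r * h (n - r))
    (n : ℕ) (hn : 1 ≤ n) :
    ((Jmat j n).charpoly).coeff 0 = (-1 : R) ^ n * n.factorial • h n ∧
      ((Jmat j n).charpoly).eval 0 = (-1 : R) ^ n * n.factorial • h n :=
  charpoly_constantTerm_Jmat_general h j h0 hD n
end

section
/- Let R be a commutative ring and let h, j : ℕ → R be sequences with h 0 = 1 and j 1 = 1 satisfying equation (D1): n·h_n = Σ_{r=1}^{n} j_r · h_{n-r} for all n ≥ 1. For n ≥ 1 let J_n(j̄) be the n×n matrix over R whose entry in row i and column k (1 ≤ i,k ≤ n) equals j_{i-k+1} if k ≤ i, equals -(i·1_R) if k = i+1, and equals 0 if k > i+1. Then for every 0 ≤ k ≤ n, the sum of the determinants of all k×k principal submatrices of J_n(j̄) equals (k!) · C(n,k) · h_k; that is, Σ_{S ⊆ {1,…,n}, #S = k} det(J_n(j̄)[S,S]) = (k!) · C(n,k) · h_k. -/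
open Finset Matrix Polynomial

section

variable {R : Type*} [CommRing R]

/-- The minor of a lower Hessenberg matrix at its last row and column `k` is block
triangular. -/
theorem det_of_hessenberg_skipColumn (f : ℕ → ℕ → R) (hf : ∀ i k, i + 1 < k → f i k = 0)
    {k m : ℕ} (hkm : k ≤ m) :
    (Matrix.of fun i c : Fin m => f i (if (c : ℕ) < k then c else c + 1)).det =
      (∏ i ∈ Ico k m, f i (i + 1)) * (Matrix.of fun i c : Fin k => f i c).det := by
  induction m, hkm using Nat.le_induction with
  | base => simp
  | succ m hkm ih =>
    have hlast : ¬ m < k := by omega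
    have hcol : ∀ i : Fin m, f i (m + 1) = 0 := fun i => hf _ _ (by omega)
    rw [det_succ_column _ (Fin.last m), Fin.sum_univ_castSucc, prod_Ico_succ_top hkm,
      mul_right_comm _ (f m (m + 1)), ← ih]
    simp [hlast, hcol, Fin.succAbove_last, ← two_mul, mul_comm]
    rfl

theorem det_of_hessenberg_succ (f : ℕ → ℕ → R) (hf : ∀ i k, i + 1 < k → f i k = 0)
    (m : ℕ) :
    (Matrix.of fun i k : Fin (m + 1) => f i k).det =
      ∑ k ∈ range (m + 1), (-1) ^ (m + k) * f m k * (∏ i ∈ Ico k m, f i (i + 1)) *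
        (Matrix.of fun i c : Fin k => f i c).det := by
  rw [det_succ_row _ (Fin.last m), ← Fin.sum_univ_eq_sum_range]
  refine sum_congr rfl fun k _ => ?_
  have hminor :
      (Matrix.of fun i k : Fin (m + 1) => f i k).submatrix (Fin.last m).succAbove k.succAbove =
        Matrix.of fun i c : Fin m => f i (if (c : ℕ) < k then c else c + 1) := by
    ext i c
    simp [Fin.succAbove, Fin.lt_def, apply_ite Fin.val]
  rw [hminor, det_of_hessenberg_skipColumn f hf (Nat.lt_succ_iff.mp k.isLt)]
  simp [mul_assoc]

theorem sum_range_sum_range_sub {M : Type*} [AddCommMonoid M] (F : ℕ → ℕ → M) (m : ℕ) :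
    ∑ i ∈ range (m + 1), ∑ a ∈ range (i + 1), F a (i - a) =
      ∑ a ∈ range (m + 1), ∑ l ∈ range (m - a + 1), F a l := by
  rw [sum_comm' (s' := fun a => Ico a (m + 1)) (t' := range (m + 1))]
  · refine sum_congr rfl fun a ha => ?_
    rw [sum_Ico_eq_sum_range, show m + 1 - a = m - a + 1 by grind]
    simp
  · intro i a
    simp only [mem_range, mem_Ico]
    omega

theorem Nat.succ_descFactorial_eq_add_mul (m i : ℕ) :
    (m + 1).descFactorial i = m.descFactorial i + i * m.descFactorial (i - 1) := by
  cases i with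
  | zero => simp
  | succ i =>
    rw [Nat.succ_descFactorial_succ, Nat.descFactorial_succ, Nat.add_sub_cancel]
    rcases le_or_gt i m with him | him
    · rw [← add_mul]; congr 1; omega
    · simp [Nat.descFactorial_of_lt him]

def descFactorialSum (h : ℕ → R) (t : R) (n : ℕ) : R :=
  ∑ i ∈ range (n + 1), n.descFactorial i • (h i * t ^ (n - i))

theorem descFactorialSum_succ_eq_add (h : ℕ → R) (t : R) (m : ℕ) :
    descFactorialSum h t (m + 1) =
      t * descFactorialSum h t m +
        ∑ i ∈ range (m + 1), m.descFactorial i • ((i + 1) • h (i + 1) * t ^ (m - i)) := by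
  have htQ : t * descFactorialSum h t m =
      ∑ i ∈ range (m + 2), m.descFactorial i • (h i * t ^ (m + 1 - i)) := by
    rw [descFactorialSum, sum_range_succ _ (m + 1), Nat.descFactorial_of_lt (by omega), zero_smul,
      add_zero, mul_sum]
    refine sum_congr rfl fun i hi => ?_
    rw [mul_smul_comm, mul_left_comm, ← pow_succ', Nat.sub_add_comm (by simpa using hi)]
  rw [htQ, descFactorialSum]
  simp_rw [Nat.succ_descFactorial_eq_add_mul, add_smul, sum_add_distrib, add_right_inj]
  rw [sum_range_succ']
  simp only [mul_smul, zero_smul, add_zero, Nat.add_sub_cancel, Nat.add_sub_add_right]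
  refine sum_congr rfl fun i _ => ?_
  rw [← add_smul, smul_mul_assoc, smul_comm]

theorem descFactorialSum_succ (h j : ℕ → R)
    (hD : ∀ i, (i + 1) • h (i + 1) = ∑ a ∈ range (i + 1), j (a + 1) * h (i - a))
    (t : R) (m : ℕ) :
    descFactorialSum h t (m + 1) =
      ∑ a ∈ range (m + 1), m.descFactorial a •
        ((j (a + 1) + if a = 0 then t else 0) * descFactorialSum h t (m - a)) := by
  simp only [add_mul, ite_mul, zero_mul, smul_add, smul_ite, smul_zero, sum_add_distrib,
    sum_ite_eq', mem_range, Nat.zero_lt_succ, if_true, Nat.descFactorial_zero, one_smul,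
    Nat.sub_zero]
  rw [descFactorialSum_succ_eq_add, add_comm, add_left_inj]
  simp_rw [hD, sum_mul, smul_sum, descFactorialSum, mul_sum, smul_sum]
  set F : ℕ → ℕ → R := fun a l =>
    m.descFactorial (a + l) • (j (a + 1) * h l * t ^ (m - (a + l)))
  calc _ = ∑ i ∈ range (m + 1), ∑ a ∈ range (i + 1), F a (i - a) :=
        sum_congr rfl fun i _ => sum_congr rfl fun a ha => by
          simp only [F, Nat.add_sub_cancel' (Nat.lt_succ_iff.mp (mem_range.mp ha))]
    _ = ∑ a ∈ range (m + 1), ∑ l ∈ range (m - a + 1), F a l := sum_range_sum_range_sub F m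
    _ = _ := sum_congr rfl fun a _ => sum_congr rfl fun l _ => by
          have hdesc := Nat.descFactorial_mul_descFactorial (n := m) (Nat.le_add_right a l)
          rw [Nat.add_sub_cancel_left] at hdesc
          rw [mul_smul_comm, smul_smul, mul_comm, hdesc, Nat.sub_sub, ← mul_assoc]

def Jentry (j : ℕ → R) (i k : ℕ) : R :=
  if k ≤ i then j (i - k + 1) else if k = i + 1 then -((i + 1 : ℕ) : R) else 0

theorem Jmat_eq_of (j : ℕ → R) (n : ℕ) :
    Jmat j n = Matrix.of fun i k : Fin n => Jentry j i k :=
  rfl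

theorem Jentry_eq_zero_of_add_one_lt (j : ℕ → R) {i k : ℕ} (hik : i + 1 < k) :
    Jentry j i k = 0 := by
  rw [Jentry, if_neg (by omega), if_neg (by omega)]

theorem prod_Ico_Jentry_succ (j : ℕ → R) {k m : ℕ} (hkm : k ≤ m) :
    ∏ i ∈ Ico k m, Jentry j i (i + 1) = (-1) ^ (m - k) * (m.descFactorial (m - k) : R) := by
  induction m, hkm using Nat.le_induction with
  | base => simp
  | succ m hkm ih =>
    rw [prod_Ico_succ_top hkm, ih, Nat.sub_add_comm hkm, Nat.succ_descFactorial_succ, Jentry,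
      if_neg (by omega), if_pos rfl, pow_succ]
    push_cast
    ring

theorem det_Jmat_succ (j : ℕ → R) (m : ℕ) :
    (Jmat j (m + 1)).det =
      ∑ a ∈ range (m + 1), m.descFactorial a • (j (a + 1) * (Jmat j (m - a)).det) := by
  rw [Jmat_eq_of, det_of_hessenberg_succ _ (fun _ _ => Jentry_eq_zero_of_add_one_lt j),
    ← sum_range_reflect]
  refine sum_congr rfl fun a ha => ?_
  have ham : a ≤ m := Nat.lt_succ_iff.mp (mem_range.mp ha)
  rw [Nat.add_sub_cancel, prod_Ico_Jentry_succ j (Nat.sub_le m a), Nat.sub_sub_self ham, Jentry,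
    if_pos (Nat.sub_le m a), Nat.sub_sub_self ham, Jmat_eq_of, nsmul_eq_mul]
  have hsign : (-1 : R) ^ (m + (m - a)) * (-1) ^ a = 1 := by
    rw [← pow_add, show m + (m - a) + a = 2 * m by omega, pow_mul, neg_one_sq, one_pow]
  linear_combination (j (a + 1) * (m.descFactorial a : R) *
    (Matrix.of fun i k : Fin (m - a) => Jentry j i k).det) * hsign

theorem det_Jmat_add_ite_eq_descFactorialSum (h j : ℕ → R) (h0 : h 0 = 1)
    (hD : ∀ i, (i + 1) • h (i + 1) = ∑ a ∈ range (i + 1), j (a + 1) * h (i - a))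
    (t : R) (n : ℕ) :
    (Jmat (fun r => j r + if r = 1 then t else 0) n).det = descFactorialSum h t n := by
  induction n using Nat.strong_induction_on with
  | _ n ih =>
    cases n with
    | zero => simp [descFactorialSum, h0]
    | succ m =>
      rw [det_Jmat_succ, descFactorialSum_succ h j hD]
      refine sum_congr rfl fun a _ => ?_
      simp only [ih (m - a) (by omega), Nat.add_eq_right]

theorem charmatrix_neg_Jmat (j : ℕ → R) (n : ℕ) :
    (-(Jmat j n)).charmatrix = Jmat (fun r => C (j r) + if r = 1 then X else 0) n := by
  ext i k : 1
  by_cases hik : i = k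
  · subst hik
    simp [Jmat, add_comm]
  · have hik' : (i : ℕ) ≠ k := Fin.val_ne_of_ne hik
    simp only [charmatrix_apply, diagonal_apply_ne _ hik, Jmat, Matrix.of_apply, Matrix.neg_apply,
      map_neg, zero_sub, neg_neg]
    split_ifs <;> first | omega | simp

theorem coeff_descFactorialSum_C_X (h : ℕ → R) {k n : ℕ} (hkn : k ≤ n) :
    (descFactorialSum (fun i => C (h i)) X n).coeff (n - k) = n.descFactorial k • h k := by
  rw [descFactorialSum, finsetSum_coeff, sum_eq_single k]
  · rw [coeff_smul, coeff_C_mul_X_pow, if_pos rfl]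
  · intro i hi hik
    rw [coeff_smul, coeff_C_mul_X_pow, if_neg (by simp at hi; omega), smul_zero]
  · simp; omega

theorem Matrix.sum_det_submatrix_eq_coeff_charpoly_neg {n : Type*} [Fintype n] [DecidableEq n]
    (M : Matrix n n R) {k : ℕ} (hk : k ≤ Fintype.card n) :
    ∑ s ∈ univ.powersetCard k, (M.submatrix (Subtype.val : s → n) Subtype.val).det =
      (-M).charpoly.coeff (Fintype.card n - k) := by
  rw [charpoly_coeff_eq_sum_minors _ _ hk, mul_sum]
  refine sum_congr rfl fun s hs => ?_
  simp only [submatrix_neg, Pi.neg_apply, det_neg, Fintype.card_coe, (mem_powersetCard.mp hs).2,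
    ← mul_assoc, ← mul_pow, neg_one_mul, neg_neg, one_pow, one_mul]

end

theorem sum_principal_minors_Jmat_general {R : Type*} [CommRing R] (h j : ℕ → R)
    (h0 : h 0 = 1)
    (hD : ∀ n : ℕ, 1 ≤ n → n • h n = ∑ r ∈ Finset.Icc 1 n, j r * h (n - r))
    (n : ℕ) (k : ℕ) (hk : k ≤ n) :
    (∑ S ∈ Finset.powersetCard k (Finset.univ : Finset (Fin n)),
        ((Jmat j n).submatrix (fun a : S => (a : Fin n)) (fun a : S => (a : Fin n))).det) =
      (k.factorial * n.choose k) • h k := by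
  have hD' : ∀ i, (i + 1) • h (i + 1) = ∑ a ∈ range (i + 1), j (a + 1) * h (i - a) := by
    intro i
    rw [hD (i + 1) (Nat.le_add_left 1 i), ← Ico_succ_right_eq_Icc, Order.succ_eq_add_one,
      sum_Ico_eq_sum_range]
    simp [add_comm]
  have hDC : ∀ i, (i + 1) • C (h (i + 1)) =
      ∑ a ∈ range (i + 1), C (j (a + 1)) * C (h (i - a)) := by
    intro i
    simp only [← map_nsmul, hD', map_sum, map_mul]
  rw [Matrix.sum_det_submatrix_eq_coeff_charpoly_neg _ (by rwa [Fintype.card_fin]),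
    Matrix.charpoly, charmatrix_neg_Jmat,
    det_Jmat_add_ite_eq_descFactorialSum (fun i => C (h i)) (fun r => C (j r))
      (by rw [h0, map_one]) hDC,
    Fintype.card_fin, coeff_descFactorialSum_C_X _ hk, Nat.descFactorial_eq_factorial_mul_choose]

/-- If `h 0 = 1`, `j 1 = 1` and (D1) holds, then for `0 ≤ k ≤ n` the sum of the
determinants of all `k × k` principal submatrices of `J_n(j̄)` equals `k! * C(n,k) • h k`. -/
theorem sum_principal_minors_Jmat {R : Type*} [CommRing R] (h j : ℕ → R)
    (h0 : h 0 = 1) (j1 : j 1 = 1)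
    (hD : ∀ n : ℕ, 1 ≤ n → n • h n = ∑ r ∈ Finset.Icc 1 n, j r * h (n - r))
    (n : ℕ) (hn : 1 ≤ n) (k : ℕ) (hk : k ≤ n) :
    (∑ S ∈ Finset.powersetCard k (Finset.univ : Finset (Fin n)),
        ((Jmat j n).submatrix (fun a : S => (a : Fin n)) (fun a : S => (a : Fin n))).det) =
      (k.factorial * n.choose k) • h k :=
  sum_principal_minors_Jmat_general h j h0 hD n k hk
end
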